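/- For the closure set Cl(Φ,[0,1)) of a BoundedMITL[F_b,P_b] formula Φ in normal form, the cardinality of Cl(Φ,[0,1)) is at most exponential in the modal-DAG size of Φ: |Cl(Φ,[0,1))| = O(2^l) where l is the modal-DAG size of Φ (with constants encoded in binary), because each modality F_I or P_I with interval I of integer length m contributes m+1 interval-shifted requirements per incoming requirement, and m ≤ 2^{|binary encoding of m|}. -/

import Mathlib

namespace Stmt19

/-- Syntax of BoundedMITL[F_b,P_b] over alphabet `A`: unary MITL where each modality
carries a bounded interval ⟨l,u⟩ with natural-number endpoints `l < u < ∞`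
(the openness of the endpoints is irrelevant to the closure construction). -/
inductive BF (A : Type) : Type
  | atom : A → BF A
  | or : BF A → BF A → BF A
  | not : BF A → BF A
  | fut : ℕ → ℕ → BF A → BF A
  | past : ℕ → ℕ → BF A → BF A

/-- Conjunction, as a derived boolean connective. -/
def BF.and {A : Type} (p q : BF A) : BF A := .not (.or (.not p) (.not q))

mutual
  /-- Normal form: a disjunction of normal-form disjuncts. -/
  inductive NF {A : Type} : BF A → Prop
    | base {φ : BF A} : NFD φ → NF φ
    | or {φ ψ : BF A} : NF φ → NF ψ → NF (.or φ ψ)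
  /-- A normal-form disjunct: `a ∧ B({ψ_i})`. -/
  inductive NFD {A : Type} : BF A → Prop
    | mk {a : A} {ψ : BF A} : BC ψ → NFD (BF.and (.atom a) ψ)
  /-- Boolean combinations of modal formulas. -/
  inductive BC {A : Type} : BF A → Prop
    | modal {ψ : BF A} : NFM ψ → BC ψ
    | or {φ ψ : BF A} : BC φ → BC ψ → BC (.or φ ψ)
    | not {φ : BF A} : BC φ → BC (.not φ)
  /-- Modal formulas: F or P with a bounded non-singular interval ⟨l,u⟩, l < u,
  and a normal-form argument. -/
  inductive NFM {A : Type} : BF A → Prop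
    | fut {l u : ℕ} {φ : BF A} : l < u → NF φ → NFM (.fut l u φ)
    | past {l u : ℕ} {φ : BF A} : l < u → NF φ → NFM (.past l u φ)
end

/-- Closure contributions of the modal subformulas of a formula, relative to the unit
interval [r,r+1): `F_{⟨l,u⟩} δ` generates requirements `(δ, [r+j, r+j+1))` for
l ≤ j ≤ u, and `P_{⟨l,u⟩} δ` generates `(δ, [r−j, r−j+1))` for l ≤ j ≤ u
(a unit interval [r,r+1) is represented by its left endpoint r). -/
def ClM {A : Type} : BF A → ℤ → Set (BF A × ℤ)
  | .atom _, _ => ∅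
  | .or p q, r => ClM p r ∪ ClM q r
  | .not p, r => ClM p r
  | .fut l u d, r => ⋃ j ∈ Finset.Icc l u, insert (d, r + (j : ℤ)) (ClM d (r + (j : ℤ)))
  | .past l u d, r => ⋃ j ∈ Finset.Icc l u, insert (d, r - (j : ℤ)) (ClM d (r - (j : ℤ)))

/-- The closure set Cl(φ,[r,r+1)). -/
def Cl {A : Type} (φ : BF A) (r : ℤ) : Set (BF A × ℤ) := insert (φ, r) (ClM φ r)

/-- The set of modal subformulas of a formula (shared subformulas counted once,
as in a DAG representation). -/
def modalSubs {A : Type} : BF A → Set (BF A)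
  | .atom _ => ∅
  | .or p q => modalSubs p ∪ modalSubs q
  | .not p => modalSubs p
  | .fut l u p => insert (.fut l u p) (modalSubs p)
  | .past l u p => insert (.past l u p) (modalSubs p)

/-- Length of the binary encodings of the top-level interval constants of a modal
formula. -/
def topConstLen {A : Type} : BF A → ℕ
  | .fut l u _ => Nat.log2 (l + 1) + Nat.log2 (u + 1) + 2
  | .past l u _ => Nat.log2 (l + 1) + Nat.log2 (u + 1) + 2
  | _ => 0

/-- The modal-DAG size of a formula: number of modal nodes in the DAG plus the sum of
the binary-encoding lengths of the interval constants. -/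
noncomputable def msize {A : Type} (φ : BF A) : ℕ :=
  (modalSubs φ).ncard + ∑ᶠ ψ ∈ modalSubs φ, topConstLen ψ

/-!
Apart from `(φ, r)`, every requirement of `Cl φ r` has the form `(δ, r')` where `δ` is the
argument of a modal subformula of `φ`. The shift `r' - r` accumulates the upper bounds of the
modalities along a chain of nested modal subformulas; these are pairwise distinct (each is
strictly smaller than the one enclosing it), so `|r' - r|` is at most the sum `W` of the upper
bounds over all `N` modal subformulas. Writing `S` for the total binary length of the constants,
each bound is below `2 ^ S`, so `W ≤ N * 2 ^ S` and `|Cl φ r| ≤ N * (2 * W + 1) + 1`, which is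
`O(2 ^ (2 * N + S))`.
-/

open Finset

section

variable {A : Type}

theorem modalSubs_finite (φ : BF A) : (modalSubs φ).Finite := by
  induction φ with
  | atom => exact Set.finite_empty
  | or p q hp hq => exact hp.union hq
  | not p hp => exact hp
  | fut l u p hp => exact hp.insert _
  | past l u p hp => exact hp.insert _

theorem sizeOf_le_of_mem_modalSubs {ψ φ : BF A} (h : ψ ∈ modalSubs φ) :
    sizeOf ψ ≤ sizeOf φ := by
  induction φ with
  | atom => simp [modalSubs] at h
  | or p q hp hq =>
    simp only [BF.or.sizeOf_spec]
    rcases h with h | h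
    · have := hp h; omega
    · have := hq h; omega
  | not p hp => simp only [BF.not.sizeOf_spec]; have := hp h; omega
  | fut l u p hp =>
    rcases h with rfl | h
    · rfl
    · simp only [BF.fut.sizeOf_spec]; have := hp h; omega
  | past l u p hp =>
    rcases h with rfl | h
    · rfl
    · simp only [BF.past.sizeOf_spec]; have := hp h; omega

theorem fut_notMem_modalSubs (l u : ℕ) (d : BF A) : BF.fut l u d ∉ modalSubs d := fun h => by
  have := sizeOf_le_of_mem_modalSubs h
  simp only [BF.fut.sizeOf_spec] at this
  omega

theorem past_notMem_modalSubs (l u : ℕ) (d : BF A) : BF.past l u d ∉ modalSubs d := fun h => by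
  have := sizeOf_le_of_mem_modalSubs h
  simp only [BF.past.sizeOf_spec] at this
  omega

noncomputable def modalSubsFinset (φ : BF A) : Finset (BF A) := (modalSubs_finite φ).toFinset

@[simp]
theorem coe_modalSubsFinset (φ : BF A) : (modalSubsFinset φ : Set (BF A)) = modalSubs φ :=
  Set.Finite.coe_toFinset _

@[simp]
theorem mem_modalSubsFinset {ψ φ : BF A} : ψ ∈ modalSubsFinset φ ↔ ψ ∈ modalSubs φ :=
  Set.Finite.mem_toFinset _

theorem msize_eq (φ : BF A) :
    msize φ = #(modalSubsFinset φ) + ∑ ψ ∈ modalSubsFinset φ, topConstLen ψ := by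
  rw [msize, ← coe_modalSubsFinset, finsum_mem_coe_finset, Set.ncard_coe_finset]

def BF.arg : BF A → BF A
  | .fut _ _ d => d
  | .past _ _ d => d
  | φ => φ

def BF.maxShift : BF A → ℕ
  | .fut _ u _ => u
  | .past _ u _ => u
  | _ => 0

noncomputable def totalShift (φ : BF A) : ℕ := ∑ ψ ∈ modalSubsFinset φ, ψ.maxShift

theorem totalShift_le_or_left (p q : BF A) : totalShift p ≤ totalShift (.or p q) :=
  sum_le_sum_of_subset fun _ => by simp_all [modalSubs]

theorem totalShift_le_or_right (p q : BF A) : totalShift q ≤ totalShift (.or p q) :=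
  sum_le_sum_of_subset fun _ => by simp_all [modalSubs]

theorem totalShift_fut (l u : ℕ) (d : BF A) : totalShift (.fut l u d) = u + totalShift d := by
  classical
  have : modalSubsFinset (.fut l u d) = insert (.fut l u d) (modalSubsFinset d) := by
    ext; simp [modalSubs]
  rw [totalShift, this, sum_insert (by simpa using fut_notMem_modalSubs l u d)]
  rfl

theorem totalShift_past (l u : ℕ) (d : BF A) : totalShift (.past l u d) = u + totalShift d := by
  classical
  have : modalSubsFinset (.past l u d) = insert (.past l u d) (modalSubsFinset d) := by
    ext; simp [modalSubs]
  rw [totalShift, this, sum_insert (by simpa using past_notMem_modalSubs l u d)]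
  rfl

theorem ClM_subset (φ : BF A) (r : ℤ) :
    ClM φ r ⊆ (BF.arg '' modalSubs φ) ×ˢ Set.Icc (r - totalShift φ) (r + totalShift φ) := by
  induction φ generalizing r with
  | atom => exact Set.empty_subset _
  | or p q hp hq =>
    have hp' := totalShift_le_or_left p q
    have hq' := totalShift_le_or_right p q
    rintro x (hx | hx)
    · obtain ⟨⟨ψ, hψ, hψx⟩, hx₁, hx₂⟩ := hp r hx
      exact ⟨⟨ψ, Or.inl hψ, hψx⟩, by omega, by omega⟩
    · obtain ⟨⟨ψ, hψ, hψx⟩, hx₁, hx₂⟩ := hq r hx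
      exact ⟨⟨ψ, Or.inr hψ, hψx⟩, by omega, by omega⟩
  | not p hp => exact hp r
  | fut l u d hd =>
    intro x hx
    simp only [ClM, Set.mem_iUnion, Finset.mem_Icc, exists_prop] at hx
    obtain ⟨j, ⟨-, hju⟩, rfl | hx⟩ := hx
    · refine ⟨⟨_, Or.inl rfl, rfl⟩, ?_, ?_⟩ <;> simp only [totalShift_fut] <;> push_cast <;> omega
    · obtain ⟨⟨ψ, hψ, hψx⟩, hx₁, hx₂⟩ := hd _ hx
      refine ⟨⟨ψ, Or.inr hψ, hψx⟩, ?_, ?_⟩ <;> simp only [totalShift_fut] at * <;> push_cast <;> omega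
  | past l u d hd =>
    intro x hx
    simp only [ClM, Set.mem_iUnion, Finset.mem_Icc, exists_prop] at hx
    obtain ⟨j, ⟨-, hju⟩, rfl | hx⟩ := hx
    · refine ⟨⟨_, Or.inl rfl, rfl⟩, ?_, ?_⟩ <;> simp only [totalShift_past] <;> push_cast <;> omega
    · obtain ⟨⟨ψ, hψ, hψx⟩, hx₁, hx₂⟩ := hd _ hx
      refine ⟨⟨ψ, Or.inr hψ, hψx⟩, ?_, ?_⟩ <;> simp only [totalShift_past] at * <;> push_cast <;> omega

theorem ncard_Cl_le (φ : BF A) (r : ℤ) :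
    (Cl φ r).ncard ≤ #(modalSubsFinset φ) * (2 * totalShift φ + 1) + 1 := by
  have hIcc : (Set.Icc (r - totalShift φ) (r + totalShift φ)).ncard = 2 * totalShift φ + 1 := by
    rw [← Finset.coe_Icc, Set.ncard_coe_finset, Int.card_Icc]; omega
  have hfin : ((BF.arg '' modalSubs φ) ×ˢ Set.Icc (r - totalShift φ) (r + totalShift φ)).Finite :=
    ((modalSubs_finite φ).image _).prod (Set.finite_Icc _ _)
  calc (Cl φ r).ncard ≤ (ClM φ r).ncard + 1 := Set.ncard_insert_le _ _
    _ ≤ (BF.arg '' modalSubs φ).ncard * (2 * totalShift φ + 1) + 1 := by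
      rw [← hIcc, ← Set.ncard_prod]
      exact Nat.add_le_add_right (Set.ncard_le_ncard (ClM_subset φ r) hfin) 1
    _ ≤ #(modalSubsFinset φ) * (2 * totalShift φ + 1) + 1 := by
      rw [← Set.ncard_coe_finset, coe_modalSubsFinset]
      exact Nat.add_le_add_right (Nat.mul_le_mul_right _ (Set.ncard_image_le (modalSubs_finite φ))) 1

theorem maxShift_le_two_pow (ψ : BF A) : ψ.maxShift ≤ 2 ^ topConstLen ψ := by
  cases ψ with
  | fut l u d | past l u d =>
    calc u ≤ 2 ^ (Nat.log2 (u + 1) + 1) := (Nat.lt_succ_self u).le.trans Nat.lt_log2_self.le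
      _ ≤ 2 ^ topConstLen _ := Nat.pow_le_pow_right two_pos (by simp only [topConstLen]; omega)
  | _ => exact Nat.zero_le _

theorem totalShift_le (φ : BF A) :
    totalShift φ ≤ #(modalSubsFinset φ) * 2 ^ ∑ ψ ∈ modalSubsFinset φ, topConstLen ψ := by
  rw [← smul_eq_mul, ← sum_const]
  refine sum_le_sum fun ψ hψ => (maxShift_le_two_pow ψ).trans ?_
  exact Nat.pow_le_pow_right two_pos (single_le_sum (fun _ _ => Nat.zero_le _) hψ)

end

/-- for a BoundedMITL[F_b,P_b] formula Φ in normal form, the cardinality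
of the closure set Cl(Φ,[0,1)) is at most exponential in the modal-DAG size of Φ
(constants in binary): |Cl(Φ,[0,1))| = O(2^l) for l = msize Φ. -/
theorem closure_card_exponential {A : Type} :
    ∃ C : ℕ, 0 < C ∧ ∀ φ : BF A, NF φ →
      (Cl φ 0).ncard ≤ C * 2 ^ (C * msize φ) := by
  refine ⟨4, by norm_num, fun φ _ => ?_⟩
  set N := #(modalSubsFinset φ)
  set S := ∑ ψ ∈ modalSubsFinset φ, topConstLen ψ
  have hN : N ≤ 2 ^ N := N.lt_two_pow_self.le
  have hW : totalShift φ ≤ N * 2 ^ S := totalShift_le φ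
  have hS : 1 ≤ 2 ^ S := Nat.one_le_two_pow
  calc (Cl φ 0).ncard ≤ N * (2 * totalShift φ + 1) + 1 := ncard_Cl_le φ 0
    _ ≤ 2 ^ N * (2 * (2 ^ N * 2 ^ S) + 1) + 1 := by gcongr; exact hW.trans (by gcongr)
    _ ≤ 4 * (2 ^ N * 2 ^ N * 2 ^ S) := by nlinarith [Nat.one_le_two_pow (n := N)]
    _ = 4 * 2 ^ (2 * N + S) := by ring
    _ ≤ 4 * 2 ^ (4 * msize φ) := by rw [msize_eq]; gcongr <;> omega

end Stmt19
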